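/- Consider the five-dimensional space E₄ = span{1, x, x², x³, x⁶} of functions on [−1,2], and let p_{4,0},…,p_{4,4} be its unique normalized Bernstein basis on [−1,2] (explicitly, p_{4,2}(x) = 98/405 + (14/45)x − (7/90)x² − (56/405)x³ + (7/810)x⁶, and similarly for the other four). Then the coordinate of x³ on p_{4,2} equals γ_{4,2} = −16/7 < −1, and consequently there exist no nodes t_{4,0},…,t_{4,4} ∈ [−1,2] and strictly positive weights α_{4,0},…,α_{4,4} such that the operator B₄f = Σ_{k=0}^4 f(t_{4,k}) α_{4,k} p_{4,k} fixes both the constant function 1 and the function x³. -/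

import Mathlib

open Set Filter Topology

noncomputable section

/-- `p k`, `k = 0, …, n`, is a Bernstein basis of the `(n+1)`-dimensional subspace `U` of
`C^n([a,b], ℝ)`: it is a basis of `U` and each `p k` has a zero of order `k` at `a`
(derivatives of order `< k` vanish at `a`, the `k`-th does not) and a zero of order
`n - k` at `b`. -/
def IsBernsteinBasisOf (a b : ℝ) (n : ℕ) (U : Submodule ℝ (ℝ → ℝ))
    (p : Fin (n + 1) → ℝ → ℝ) : Prop :=
  (∀ k, p k ∈ U) ∧ LinearIndependent ℝ p ∧ Submodule.span ℝ (Set.range p) = U ∧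
  ∀ k : Fin (n + 1),
    (∀ j : ℕ, j < (k : ℕ) → iteratedDeriv j (p k) a = 0) ∧
    iteratedDeriv (k : ℕ) (p k) a ≠ 0 ∧
    (∀ j : ℕ, j < n - (k : ℕ) → iteratedDeriv j (p k) b = 0) ∧
    iteratedDeriv (n - (k : ℕ)) (p k) b ≠ 0


/-- The five-dimensional space `E₄ = span{1, x, x², x³, x⁶}`. -/
def E₄ : Submodule ℝ (ℝ → ℝ) :=
  Submodule.span ℝ
    {(fun _ => (1 : ℝ)), (fun x => x), (fun x => x ^ 2), (fun x => x ^ 3), (fun x => x ^ 6)}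

/-!
Each Bernstein condition imposes four linear conditions on the five monomial coefficients of
`p k ∈ E₄`, so `p k` is determined up to a scalar, and the partition of unity fixes the scalars.
Expanding `x³` in the resulting explicit basis gives the coordinate `-16/7` on `p 2`. If `B₄`
fixed `1`, linear independence would force `α = 1`; then `B₄ x³ = x³` would force
`t 2 ^ 3 = -16/7 < -1`, impossible for `t 2 ∈ [-1, 2]`.
-/

lemma iteratedDeriv_sum_mul_pow {𝕜 ι : Type*} [NontriviallyNormedField 𝕜] (s : Finset ι)
    (c : ι → 𝕜) (m : ι → ℕ) (j : ℕ) (x : 𝕜) :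
    iteratedDeriv j (fun y => ∑ i ∈ s, c i * y ^ m i) x =
      ∑ i ∈ s, c i * (m i).descFactorial j * x ^ (m i - j) := by
  rw [iteratedDeriv_fun_sum fun i _ => by fun_prop]
  simp [mul_assoc]

def e₄Exponent : Fin 5 → ℕ := ![0, 1, 2, 3, 6]

lemma exists_eq_sum_of_mem_E₄ {f : ℝ → ℝ} (hf : f ∈ E₄) :
    ∃ c : Fin 5 → ℝ, f = fun x => ∑ i, c i * x ^ e₄Exponent i := by
  simp only [E₄, Submodule.mem_span_insert, Submodule.mem_span_singleton] at hf
  obtain ⟨c₀, _, ⟨c₁, _, ⟨c₂, _, ⟨c₃, _, ⟨c₆, rfl⟩, rfl⟩, rfl⟩, rfl⟩, rfl⟩ := hf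
  refine ⟨![c₀, c₁, c₂, c₃, c₆], funext fun x => ?_⟩
  simp [Fin.sum_univ_five, e₄Exponent]
  ring

-- Row `k` is `(x + 1) ^ k * (2 - x) ^ (4 - k)` times a quadratic, expanded on `1, x, x², x³, x⁶`
-- and scaled so that the rows sum to `(1, 0, 0, 0, 0)`.
def e₄BernsteinCoeff : Fin 5 → Fin 5 → ℝ := ![
  (1 / 2673 : ℝ) • ![640, -1152, 720, -160, 1],
  (-38 / 13365 : ℝ) • ![-152, 36, 126, -61, 1],
  (7 / 810 : ℝ) • ![28, 36, -9, -16, 1],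
  (-2 / 243 : ℝ) • ![-8, -18, -9, 2, 1],
  (1 / 486 : ℝ) • ![10, 36, 45, 20, 1]]

def e₄Bernstein (k : Fin 5) (x : ℝ) : ℝ := ∑ i, e₄BernsteinCoeff k i * x ^ e₄Exponent i

lemma exists_eq_mul_e₄Bernstein_of_vanishing (k : Fin 5) {f : ℝ → ℝ} (hf : f ∈ E₄)
    (ha : ∀ j < (k : ℕ), iteratedDeriv j f (-1) = 0)
    (hb : ∀ j < 4 - (k : ℕ), iteratedDeriv j f 2 = 0) :
    ∃ s : ℝ, f = fun x => s * e₄Bernstein k x := by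
  obtain ⟨c, rfl⟩ := exists_eq_sum_of_mem_E₄ hf
  simp only [iteratedDeriv_sum_mul_pow] at ha hb
  -- four linear conditions on five coefficients, solved by the multiples of row `k`
  have hc : c = (c 4 / e₄BernsteinCoeff k 4) • e₄BernsteinCoeff k := by
    funext i
    fin_cases k <;>
      simp [Nat.lt_succ_iff_lt_or_eq, Nat.le_one_iff_eq_zero_or_eq_one, or_imp, forall_and,
        forall_eq, Fin.sum_univ_five, e₄Exponent, Nat.descFactorial] at ha hb <;>
      fin_cases i <;> simp [e₄BernsteinCoeff] <;> linarith
  obtain ⟨s, rfl⟩ : ∃ s : ℝ, c = s • e₄BernsteinCoeff k := ⟨_, hc⟩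
  exact ⟨s, funext fun x => by simp [e₄Bernstein, Finset.mul_sum, mul_assoc]⟩

lemma sum_e₄Bernstein (x : ℝ) : ∑ k, e₄Bernstein k x = 1 := by
  simp [e₄Bernstein, e₄BernsteinCoeff, e₄Exponent, Fin.sum_univ_five]
  ring

lemma pow_three_eq_sum_e₄Bernstein (x : ℝ) :
    x ^ 3 = ∑ k, ![-1, 61 / 38, -16 / 7, -1, 8] k * e₄Bernstein k x := by
  simp [e₄Bernstein, e₄BernsteinCoeff, e₄Exponent, Fin.sum_univ_five]
  ring

lemma eq_of_sum_mul_e₄Bernstein_eq {γ δ : Fin 5 → ℝ}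
    (h : ∀ x ∈ Icc (-1 : ℝ) 2, ∑ k, γ k * e₄Bernstein k x = ∑ k, δ k * e₄Bernstein k x) :
    γ = δ := by
  have h₁ := h (-1) (by norm_num)
  have h₂ := h 0 (by norm_num)
  have h₃ := h (1 / 2) (by norm_num)
  have h₄ := h 1 (by norm_num)
  have h₅ := h 2 (by norm_num)
  simp [e₄Bernstein, e₄BernsteinCoeff, e₄Exponent, Fin.sum_univ_five] at h₁ h₂ h₃ h₄ h₅
  norm_num at h₁ h₂ h₃ h₄ h₅
  funext k
  fin_cases k <;> simp <;> linarith

lemma IsBernsteinBasisOf.eq_e₄Bernstein {p : Fin 5 → ℝ → ℝ}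
    (hp : IsBernsteinBasisOf (-1) 2 4 E₄ p) (hsum : ∀ x ∈ Icc (-1 : ℝ) 2, ∑ k, p k x = 1) :
    p = e₄Bernstein := by
  choose s hs using fun k => exists_eq_mul_e₄Bernstein_of_vanishing k (hp.1 k)
    (hp.2.2.2 k).1 (hp.2.2.2 k).2.2.1
  have hs_one : s = fun _ => 1 := eq_of_sum_mul_e₄Bernstein_eq fun x hx => by
    simpa [hs, sum_e₄Bernstein] using hsum x hx
  funext k x
  simp [hs, hs_one]

theorem e4_no_bernstein_operator_on_neg_one_two_general
    (p : Fin 5 → ℝ → ℝ)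
    (hp : IsBernsteinBasisOf (-1) 2 4 E₄ p)
    (hpnorm : ∀ x ∈ Set.Icc (-1 : ℝ) 2, ∑ k, p k x = 1) :
    (∀ x ∈ Set.Icc (-1 : ℝ) 2, p 2 x =
      98 / 405 + 14 / 45 * x - 7 / 90 * x ^ 2 - 56 / 405 * x ^ 3 + 7 / 810 * x ^ 6) ∧
    (∀ γ : Fin 5 → ℝ, (∀ x ∈ Set.Icc (-1 : ℝ) 2, x ^ 3 = ∑ k, γ k * p k x) →
      γ 2 = -16 / 7 ∧ γ 2 < -1) ∧
    ¬ ∃ t α : Fin 5 → ℝ, (∀ k, t k ∈ Set.Icc (-1 : ℝ) 2) ∧ (∀ k, 0 < α k) ∧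
        (∀ x ∈ Set.Icc (-1 : ℝ) 2, ∑ k, α k * p k x = 1) ∧
        (∀ x ∈ Set.Icc (-1 : ℝ) 2, ∑ k, (t k) ^ 3 * α k * p k x = x ^ 3) := by
  obtain rfl := hp.eq_e₄Bernstein hpnorm
  have coord_cube (γ : Fin 5 → ℝ)
      (hγ : ∀ x ∈ Icc (-1 : ℝ) 2, x ^ 3 = ∑ k, γ k * e₄Bernstein k x) : γ 2 = -16 / 7 := by
    rw [eq_of_sum_mul_e₄Bernstein_eq fun x hx => (hγ x hx).symm.trans
      (pow_three_eq_sum_e₄Bernstein x)]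
    rfl
  refine ⟨fun x _ => ?_, fun γ hγ => ⟨coord_cube γ hγ, by linarith [coord_cube γ hγ]⟩, ?_⟩
  · simp [e₄Bernstein, e₄BernsteinCoeff, e₄Exponent, Fin.sum_univ_five]
    ring
  rintro ⟨t, α, ht, -, hα_one, hα_cube⟩
  have hα : α = fun _ => 1 := eq_of_sum_mul_e₄Bernstein_eq fun x hx => by
    simp [hα_one x hx, sum_e₄Bernstein]
  have ht₂ : t 2 ^ 3 = -16 / 7 := by
    simpa [hα] using coord_cube (fun k => t k ^ 3 * α k) fun x hx => (hα_cube x hx).symm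
  have h := (Odd.pow_le_pow (by decide : Odd 3)).2 (ht 2).1
  norm_num [ht₂] at h

/-- On `[-1,2]`, if `p` is the (unique) normalized non-negative Bernstein basis of
`E₄ = span{1, x, x², x³, x⁶}`, then `p 2` is the explicitly displayed polynomial, the
coordinate of `x³` on `p 2` is `γ 2 = -16/7 < -1`, and consequently there is no generalized
Bernstein operator built on `p` (nodes in `[-1,2]`, strictly positive weights) fixing both
`1` and `x³`. -/
theorem e4_no_bernstein_operator_on_neg_one_two
    (p : Fin 5 → ℝ → ℝ)
    (hp : IsBernsteinBasisOf (-1) 2 4 E₄ p)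
    (hpnn : ∀ k, ∀ x ∈ Set.Icc (-1 : ℝ) 2, 0 ≤ p k x)
    (hpnorm : ∀ x ∈ Set.Icc (-1 : ℝ) 2, ∑ k, p k x = 1) :
    (∀ x ∈ Set.Icc (-1 : ℝ) 2, p 2 x =
      98 / 405 + 14 / 45 * x - 7 / 90 * x ^ 2 - 56 / 405 * x ^ 3 + 7 / 810 * x ^ 6) ∧
    (∀ γ : Fin 5 → ℝ, (∀ x ∈ Set.Icc (-1 : ℝ) 2, x ^ 3 = ∑ k, γ k * p k x) →
      γ 2 = -16 / 7 ∧ γ 2 < -1) ∧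
    ¬ ∃ t α : Fin 5 → ℝ, (∀ k, t k ∈ Set.Icc (-1 : ℝ) 2) ∧ (∀ k, 0 < α k) ∧
        (∀ x ∈ Set.Icc (-1 : ℝ) 2, ∑ k, α k * p k x = 1) ∧
        (∀ x ∈ Set.Icc (-1 : ℝ) 2, ∑ k, (t k) ^ 3 * α k * p k x = x ^ 3) :=
  e4_no_bernstein_operator_on_neg_one_two_general p hp hpnorm
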